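/- arXiv:1612.01168 — 3 statements merged into one kernel-verified Lean document; each statement's English description precedes it below -/
import Mathlib

section
/- Let G be a solvable group and let ρ : G → PSL₂(ℂ) be a group homomorphism whose image is an irreducible and infinite subgroup of PSL₂(ℂ). Then the image of ρ is dihedral. -/
/-- `SL₂(ℂ)`: the group of 2×2 complex matrices of determinant 1. -/
abbrev SL2 : Type := Matrix.SpecialLinearGroup (Fin 2) ℂ

/-- `PSL₂(ℂ)`: the quotient of `SL₂(ℂ)` by its center `{±I}`. -/
abbrev PSL2 : Type := SL2 ⧸ Subgroup.center SL2

/-- A subgroup `H` of `PSL₂(ℂ)` is irreducible if no one-dimensional subspace of `ℂ²`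
(i.e. the span of a nonzero vector) is invariant under all lifts to `SL₂(ℂ)` of all
elements of `H`. -/
def IsIrreducibleSubgroup (H : Subgroup PSL2) : Prop :=
  ¬ ∃ v : Fin 2 → ℂ, v ≠ 0 ∧ ∀ M : SL2, (QuotientGroup.mk M : PSL2) ∈ H →
      ∃ c : ℂ, (M : Matrix (Fin 2) (Fin 2) ℂ).mulVec v = c • v

/-- A matrix in `SL₂(ℂ)` is diagonal of the form `[[λ,0],[0,λ⁻¹]]` or
anti-diagonal of the form `[[0,μ],[-μ⁻¹,0]]`. -/
def IsDiagOrAnti (M : SL2) : Prop :=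
  (∃ l : ℂ, l ≠ 0 ∧ (M : Matrix (Fin 2) (Fin 2) ℂ) = !![l, 0; 0, l⁻¹]) ∨
  (∃ m : ℂ, m ≠ 0 ∧ (M : Matrix (Fin 2) (Fin 2) ℂ) = !![0, m; -m⁻¹, 0])

/-- A subgroup `H` of `PSL₂(ℂ)` is dihedral if some conjugate of `H` is contained in the
image in `PSL₂(ℂ)` of the set of diagonal and anti-diagonal matrices in `SL₂(ℂ)`. -/
def IsDihedral (H : Subgroup PSL2) : Prop :=
  ∃ g : PSL2, ∀ h ∈ H, ∃ M : SL2, IsDiagOrAnti M ∧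
    g * h * g⁻¹ = (QuotientGroup.mk M : PSL2)

/-!
Let `H = ρ(G)`. The image under `ρ` of the last term of the derived series of `G` with nontrivial
image is a nontrivial abelian subgroup `A` normalized by `H`. Pick `x ∈ A`, `x ≠ 1`, lifted to
`M ∈ SL₂(ℂ)` with eigenvalues `λ, λ⁻¹`.

* If `λ = λ⁻¹`, `M` is parabolic; conjugate it to `±[[1, t], [0, 1]]` with `t ≠ 0`. For `h ∈ H`,
  `h⁻¹ x h ∈ A` commutes with `x`, and this forces `h` to be upper triangular: `H` fixes a line.
* If `λ ≠ λ⁻¹` and `tr M ≠ 0`, conjugate `M` to `diag(λ, λ⁻¹)`. Since `tr M ≠ 0`, `h x h⁻¹`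
  commutes with `x` already in `SL₂(ℂ)`, hence is `diag(λ, λ⁻¹)` or `diag(λ⁻¹, λ)`, and `h` is
  diagonal or antidiagonal.
* If every nontrivial element of `A` has trace `0`, conjugate `x` to `diag(i, -i)`; the elements
  of `A` are then diagonal or antidiagonal. If some `y ∈ A` is antidiagonal, the common
  centralizer of `x` and `y` is finite and contains `A`; as `H` conjugates `x` and `y` into `A`,
  `H` would be finite. Otherwise `A = {1, x}`, so `H` centralizes `x` and is diagonal or
  antidiagonal.
-/

open Matrix

local notation:1024 "↑ₘ" A:1024 => ((A : SL2) : Matrix (Fin 2) (Fin 2) ℂ)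

theorem exists_commutative_normalized_of_isSolvable {G Γ : Type*} [Group G] [Group Γ]
    [Group.IsSolvable G] (f : G →* Γ) (hf : f.range ≠ ⊥) :
    ∃ A : Subgroup Γ, A ≠ ⊥ ∧ (∀ a ∈ A, ∀ b ∈ A, Commute a b) ∧
      ∀ h ∈ f.range, ∀ a ∈ A, h * a * h⁻¹ ∈ A := by
  classical
  have hex : ∃ n, (derivedSeries G n).map f = ⊥ := by
    obtain ⟨n, hn⟩ := Group.IsSolvable.solvable (G := G)
    exact ⟨n, by rw [hn, Subgroup.map_bot]⟩
  obtain ⟨m, hm⟩ := Nat.exists_eq_add_one_of_ne_zero fun h0 =>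
    hf (by rw [f.range_eq_map, ← derivedSeries_zero G, ← h0]; exact Nat.find_spec hex)
  refine ⟨(derivedSeries G m).map f, Nat.find_min hex (by omega), ?_, ?_⟩
  · have hcomm : ⁅(derivedSeries G m).map f, (derivedSeries G m).map f⁆ = ⊥ := by
      rw [← Subgroup.map_commutator, ← derivedSeries_succ, ← hm]
      exact Nat.find_spec hex
    exact fun a ha b hb => (Subgroup.commutator_eq_bot_iff_le_centralizer.mp hcomm ha b hb).symm
  · rintro _ ⟨g, rfl⟩ _ ⟨a, ha, rfl⟩
    exact ⟨g * a * g⁻¹, (derivedSeries_normal G m).conj_mem a ha g, by simp⟩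

/-- The fibres of `h ↦ (h x h⁻¹, h y h⁻¹)` are cosets of the common centralizer of `x` and `y`,
and its values on `H` lie in `A × A`, with `A` inside that centralizer. -/
theorem finite_of_normalizes_of_finite_centralizer {Γ : Type*} [Group Γ] {H A : Subgroup Γ}
    (hA : ∀ a ∈ A, ∀ b ∈ A, Commute a b) (hHA : ∀ h ∈ H, ∀ a ∈ A, h * a * h⁻¹ ∈ A) {x y : Γ}
    (hx : x ∈ A) (hy : y ∈ A) (hC : {z | Commute z x ∧ Commute z y}.Finite) :
    (H : Set Γ).Finite := by
  have commute_of_conj_eq {g h a : Γ} (e : h * a * h⁻¹ = g * a * g⁻¹) : Commute (g⁻¹ * h) a := by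
    calc g⁻¹ * h * a = g⁻¹ * (h * a * h⁻¹) * h := by group
      _ = a * (g⁻¹ * h) := by rw [e]; group
  let f : Γ → Γ × Γ := fun h => (h * x * h⁻¹, h * y * h⁻¹)
  refine ((hC.prod hC).preimage' (f := f) fun b _ => ?_).subset fun h hh =>
    ⟨⟨hA _ (hHA h hh x hx) x hx, hA _ (hHA h hh x hx) y hy⟩,
      ⟨hA _ (hHA h hh y hy) x hx, hA _ (hHA h hh y hy) y hy⟩⟩
  rcases (f ⁻¹' {b}).eq_empty_or_nonempty with he | ⟨g, hg⟩
  · simp [he]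
  refine (hC.image (g * ·)).subset fun h hh => ⟨g⁻¹ * h, ?_, mul_inv_cancel_left g h⟩
  have hfg : f h = f g := hh.trans hg.symm
  simp only [f, Prod.ext_iff] at hfg
  exact ⟨commute_of_conj_eq hfg.1, commute_of_conj_eq hfg.2⟩

lemma Matrix.apply_eq_zero_of_mul_diagonal_eq {n R : Type*} [Fintype n] [DecidableEq n]
    [CommRing R] [IsDomain R] {N : Matrix n n R} {d e : n → R}
    (h : N * diagonal d = diagonal e * N) {i j : n} (hij : d j ≠ e i) : N i j = 0 := by
  have hij' := congrFun (congrFun h i) j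
  rw [mul_diagonal, diagonal_mul, mul_comm (e i)] at hij'
  by_contra hN
  exact hij (mul_left_cancel₀ hN hij')

lemma Matrix.apply_one_zero_eq_zero_of_intertwines_parabolic {ε t : ℂ} (ht : t ≠ 0)
    {X N : Matrix (Fin 2) (Fin 2) ℂ} (hX : X * !![ε, t; 0, ε] = !![ε, t; 0, ε] * X)
    (hN : N * X = !![ε, t; 0, ε] * N) : N 1 0 = 0 := by
  have hX00 := congrFun (congrFun hX 0) 0
  have hN00 := congrFun (congrFun hN 0) 0
  have hN10 := congrFun (congrFun hN 1) 0
  simp only [mul_apply, of_apply, cons_val', cons_val_zero, cons_val_fin_one, Fin.sum_univ_two,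
    cons_val_one, mul_zero, add_zero, zero_mul, zero_add] at hX00 hN00 hN10
  have hX10 : X 1 0 = 0 :=
    (mul_eq_zero.mp (by linear_combination -hX00 : t * X 1 0 = 0)).resolve_left ht
  rw [hX10] at hN00 hN10
  by_contra hne
  have hXε : X 0 0 = ε := sub_eq_zero.mp
    ((mul_eq_zero.mp (by linear_combination hN10 : N 1 0 * (X 0 0 - ε) = 0)).resolve_left hne)
  rw [hXε] at hN00
  exact hne ((mul_eq_zero.mp (by linear_combination -hN00 : t * N 1 0 = 0)).resolve_left ht)

namespace SL2

lemma det_fin_two_eq_one (N : SL2) : N 0 0 * N 1 1 - N 0 1 * N 1 0 = 1 := by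
  rw [← det_fin_two, N.det_coe]

lemma mem_center_iff {M : SL2} : M ∈ Subgroup.center SL2 ↔ M = 1 ∨ M = -1 := by
  rw [Matrix.SpecialLinearGroup.mem_center_iff]
  constructor
  · rintro ⟨r, hr, hM⟩
    rcases (show r = 1 ∨ r = -1 by simpa using hr) with rfl | rfl
    · left; ext i j; simp [← hM]
    · right; ext i j; fin_cases i <;> fin_cases j <;> simp [← hM]
  · rintro (rfl | rfl)
    · exact ⟨1, by simp, by ext i j; simp⟩
    · exact ⟨-1, by simp, by ext i j; fin_cases i <;> fin_cases j <;> simp⟩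

lemma coe_eq_coe_iff {M N : SL2} : (M : PSL2) = N ↔ N = M ∨ N = -M := by
  rw [QuotientGroup.eq, mem_center_iff, inv_mul_eq_one, inv_mul_eq_iff_eq_mul, mul_neg_one,
    eq_comm (a := M)]

lemma coe_commute_iff {M N : SL2} : Commute (M : PSL2) N ↔ Commute M N ∨ M * N = -(N * M) := by
  rw [Commute, SemiconjBy, ← QuotientGroup.mk_mul, ← QuotientGroup.mk_mul, coe_eq_coe_iff,
    Commute, SemiconjBy, eq_comm (a := N * M)]
  exact or_congr_right ⟨fun h => by rw [h, neg_neg], fun h => by rw [h, neg_neg]⟩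

lemma coe_conj (P M : SL2) : ((P * M * P⁻¹ : SL2) : PSL2) = (P : PSL2) * M * (P : PSL2)⁻¹ := rfl

lemma trace_conj (P M : SL2) : trace ↑ₘ(P * M * P⁻¹) = trace ↑ₘM := by
  rw [Matrix.SpecialLinearGroup.coe_mul, Matrix.SpecialLinearGroup.coe_mul, trace_mul_cycle,
    ← Matrix.SpecialLinearGroup.coe_mul, inv_mul_cancel, Matrix.SpecialLinearGroup.coe_one,
    one_mul]

lemma commute_of_coe_commute {M N : SL2} (h : Commute (M : PSL2) N) (htr : trace ↑ₘN ≠ 0) :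
    Commute M N := by
  refine (coe_commute_iff.mp h).resolve_right fun hMN => htr ?_
  have hconj : M * N * M⁻¹ = -N := by rw [hMN, neg_mul, mul_inv_cancel_right]
  have := trace_conj M N
  rw [hconj, Matrix.SpecialLinearGroup.coe_neg, trace_neg] at this
  linear_combination -this / 2

lemma exists_trace_eq_add_inv (M : SL2) : ∃ l ≠ 0, trace ↑ₘM = l + l⁻¹ := by
  obtain ⟨s, hs⟩ := IsAlgClosed.exists_eq_mul_self (discrim 1 (-trace ↑ₘM) 1)
  obtain ⟨l, hl⟩ := exists_quadratic_eq_zero one_ne_zero ⟨s, hs⟩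
  have hl0 : l ≠ 0 := by rintro rfl; simp at hl
  refine ⟨l, hl0, ?_⟩
  field_simp
  linear_combination -hl

/-- The first column of `P⁻¹` is an eigenvector of `M` for the eigenvalue `l`. -/
lemma exists_conj_eq_upperTriangular (M : SL2) {l : ℂ} (hl : l ≠ 0)
    (htr : trace ↑ₘM = l + l⁻¹) : ∃ (P : SL2) (t : ℂ), ↑ₘ(P * M * P⁻¹) = !![l, t; 0, l⁻¹] := by
  rw [trace_fin_two] at htr
  have hdet : (↑ₘM - scalar (Fin 2) l).det = 0 := by
    simp only [scalar_apply, det_fin_two, Matrix.sub_apply, diagonal_apply_eq, ne_eq,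
      zero_ne_one, not_false_eq_true, diagonal_apply_ne, sub_zero, one_ne_zero]
    linear_combination M.det_fin_two_eq_one - l * htr - mul_inv_cancel₀ hl
  obtain ⟨v, hv0, hv⟩ := exists_mulVec_eq_zero_iff.mpr hdet
  have hv' : v 0 ≠ 0 ∨ v 1 ≠ 0 := by
    by_contra! h
    exact hv0 (funext fun i => by fin_cases i <;> simp [h])
  obtain ⟨Q, hQ0, hQ1⟩ : ∃ Q : SL2, Q 0 0 = v 0 ∧ Q 1 0 = v 1 :=
    (Semifield.isCoprime_iff.mpr hv').exists_SL2_col 0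
  have hQ : v 0 * Q 1 1 - Q 0 1 * v 1 = 1 := by rw [← hQ0, ← hQ1]; exact Q.det_fin_two_eq_one
  have e0 := congrFun hv 0
  have e1 := congrFun hv 1
  simp only [mulVec, dotProduct, scalar_apply, Matrix.sub_apply, Fin.sum_univ_two,
    diagonal_apply_eq, ne_eq, zero_ne_one, not_false_eq_true, diagonal_apply_ne, sub_zero,
    Pi.zero_apply, one_ne_zero] at e0 e1
  obtain ⟨T, hT⟩ : ∃ T, T = Q⁻¹ * M * Q⁻¹⁻¹ := ⟨_, rfl⟩
  have hT10 : T 1 0 = 0 := by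
    simp [hT, Matrix.SpecialLinearGroup.coe_inv, adjugate_fin_two, mul_apply, Fin.sum_univ_two,
      hQ0, hQ1, vecMul, dotProduct]
    linear_combination -v 1 * e0 + v 0 * e1
  have hT00 : T 0 0 = l := by
    simp [hT, Matrix.SpecialLinearGroup.coe_inv, adjugate_fin_two, mul_apply, Fin.sum_univ_two,
      hQ0, hQ1, vecMul, dotProduct]
    linear_combination Q 1 1 * e0 - Q 0 1 * e1 + l * hQ
  have hT11 : T 1 1 = l⁻¹ := by
    have := det_fin_two_eq_one T
    rw [hT10, hT00] at this
    field_simp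
    linear_combination this
  refine ⟨Q⁻¹, T 0 1, ?_⟩
  rw [← hT]
  ext i j
  fin_cases i <;> fin_cases j <;> simp [hT00, hT10, hT11]

lemma exists_conj_eq_diagonal (M : SL2) {l : ℂ} (hl0 : l ≠ 0) (hl : l ≠ l⁻¹)
    (htr : trace ↑ₘM = l + l⁻¹) : ∃ P : SL2, ↑ₘ(P * M * P⁻¹) = diagonal ![l, l⁻¹] := by
  obtain ⟨P, t, hT⟩ := exists_conj_eq_upperTriangular M hl0 htr
  have hsub : l - l⁻¹ ≠ 0 := sub_ne_zero.mpr hl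
  let U : SL2 := ⟨!![1, t / (l - l⁻¹); 0, 1], by simp⟩
  refine ⟨U * P, ?_⟩
  rw [show U * P * M * (U * P)⁻¹ = U * (P * M * P⁻¹) * U⁻¹ by group,
    Matrix.SpecialLinearGroup.coe_mul, Matrix.SpecialLinearGroup.coe_mul, hT,
    Matrix.SpecialLinearGroup.coe_inv, adjugate_fin_two]
  ext i j
  fin_cases i <;> fin_cases j <;> simp [U]
  linear_combination -div_mul_cancel₀ t hsub

lemma isDiagOrAnti_of_apply_zero_one {N : SL2} (h01 : N 0 1 = 0) (h10 : N 1 0 = 0) :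
    IsDiagOrAnti N := by
  have hdet : N 0 0 * N 1 1 = 1 := by simpa [h01] using N.det_fin_two_eq_one
  refine Or.inl ⟨N 0 0, left_ne_zero_of_mul_eq_one hdet, ?_⟩
  ext i j
  fin_cases i <;> fin_cases j <;> simp [h01, h10, eq_inv_of_mul_eq_one_right hdet]

lemma isDiagOrAnti_of_apply_zero_zero {N : SL2} (h00 : N 0 0 = 0) (h11 : N 1 1 = 0) :
    IsDiagOrAnti N := by
  have hdet : N 0 1 * -N 1 0 = 1 := by simpa [h00] using N.det_fin_two_eq_one
  refine Or.inr ⟨N 0 1, left_ne_zero_of_mul_eq_one hdet, ?_⟩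
  ext i j
  fin_cases i <;> fin_cases j <;> simp [h00, h11, ← eq_inv_of_mul_eq_one_right hdet]

lemma ne_zero_of_coe_eq_diagonal {l : ℂ} {D : SL2} (hD : ↑ₘD = diagonal ![l, l⁻¹]) : l ≠ 0 := by
  rintro rfl
  simpa [hD] using D.det_coe

lemma isDiagOrAnti_of_coe_commute {l : ℂ} {D N : SL2} (hD : ↑ₘD = diagonal ![l, l⁻¹])
    (hl : l ≠ l⁻¹) (h : Commute (N : PSL2) D) : IsDiagOrAnti N := by
  have hl0 := ne_zero_of_coe_eq_diagonal hD
  rcases coe_commute_iff.mp h with hc | hc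
  · have hm : ↑ₘN * diagonal ![l, l⁻¹] = diagonal ![l, l⁻¹] * ↑ₘN := by
      rw [← hD, ← Matrix.SpecialLinearGroup.coe_mul, hc.eq, Matrix.SpecialLinearGroup.coe_mul]
    exact isDiagOrAnti_of_apply_zero_one (apply_eq_zero_of_mul_diagonal_eq hm hl.symm)
      (apply_eq_zero_of_mul_diagonal_eq hm hl)
  · have hm : ↑ₘN * diagonal ![l, l⁻¹] = diagonal ![-l, -l⁻¹] * ↑ₘN := by
      rw [← hD, ← Matrix.SpecialLinearGroup.coe_mul, hc, Matrix.SpecialLinearGroup.coe_neg,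
        Matrix.SpecialLinearGroup.coe_mul, hD, ← neg_mul]
      congr 1
      ext i j
      fin_cases i <;> fin_cases j <;> simp
    exact isDiagOrAnti_of_apply_zero_zero
      (apply_eq_zero_of_mul_diagonal_eq hm (by simpa [self_eq_neg] using hl0))
      (apply_eq_zero_of_mul_diagonal_eq hm (by simpa [self_eq_neg] using hl0))

/-- As `tr D ≠ 0`, `N D N⁻¹` commutes with `D` in `SL₂(ℂ)`, so it is `diag(l, l⁻¹)` or
`diag(l⁻¹, l)`. -/
lemma isDiagOrAnti_of_coe_commute_conj {l : ℂ} {D N : SL2} (hD : ↑ₘD = diagonal ![l, l⁻¹])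
    (hl : l ≠ l⁻¹) (htr : l + l⁻¹ ≠ 0) (h : Commute ((N * D * N⁻¹ : SL2) : PSL2) D) :
    IsDiagOrAnti N := by
  set B := N * D * N⁻¹ with hB
  have hl0 := ne_zero_of_coe_eq_diagonal hD
  have hBD : ↑ₘB * diagonal ![l, l⁻¹] = diagonal ![l, l⁻¹] * ↑ₘB := by
    have := commute_of_coe_commute h (by simpa [hD, Fin.sum_univ_two] using htr)
    rw [← hD, ← Matrix.SpecialLinearGroup.coe_mul, this.eq, Matrix.SpecialLinearGroup.coe_mul]
  have hB01 : B 0 1 = 0 := apply_eq_zero_of_mul_diagonal_eq hBD hl.symm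
  have hB10 : B 1 0 = 0 := apply_eq_zero_of_mul_diagonal_eq hBD hl
  have hBdiag : ↑ₘB = diagonal ![B 0 0, B 1 1] := by
    ext i j
    fin_cases i <;> fin_cases j <;> simp [hB01, hB10]
  have hND : ↑ₘN * diagonal ![l, l⁻¹] = diagonal ![B 0 0, B 1 1] * ↑ₘN := by
    rw [← hD, ← hBdiag, ← Matrix.SpecialLinearGroup.coe_mul, ← Matrix.SpecialLinearGroup.coe_mul,
      hB, inv_mul_cancel_right]
  have htrB : B 0 0 + B 1 1 = l + l⁻¹ := by
    have := trace_conj N D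
    rw [← hB, trace_fin_two, hD] at this
    simpa [Fin.sum_univ_two] using this
  have hdetB : B 0 0 * B 1 1 = 1 := by simpa [hB01] using B.det_fin_two_eq_one
  have hroots : (B 0 0 - l) * (B 0 0 - l⁻¹) = 0 := by
    linear_combination B 0 0 * htrB - hdetB + mul_inv_cancel₀ hl0
  rcases mul_eq_zero.mp hroots with h0 | h0
  · have h1 : B 1 1 = l⁻¹ := by linear_combination htrB - h0
    exact isDiagOrAnti_of_apply_zero_one
      (apply_eq_zero_of_mul_diagonal_eq hND (by simpa [sub_eq_zero.mp h0] using hl.symm))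
      (apply_eq_zero_of_mul_diagonal_eq hND (by simpa [h1] using hl))
  · have h1 : B 1 1 = l := by linear_combination htrB - h0
    exact isDiagOrAnti_of_apply_zero_zero
      (apply_eq_zero_of_mul_diagonal_eq hND (by simpa [sub_eq_zero.mp h0] using hl))
      (apply_eq_zero_of_mul_diagonal_eq hND (by simpa [h1] using hl.symm))

lemma coe_eq_of_trace_eq_zero {D Y : SL2} (hD : ↑ₘD = diagonal ![Complex.I, Complex.I⁻¹])
    {p : ℂ} (hY : ↑ₘY = !![p, 0; 0, p⁻¹]) (htr : trace ↑ₘY = 0) : (Y : PSL2) = D := by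
  have hp0 : p ≠ 0 := by
    rintro rfl
    simpa [hY] using Y.det_coe
  rw [hY, trace_fin_two_of] at htr
  have hp : p ^ 2 = Complex.I ^ 2 := by
    field_simp at htr
    rw [Complex.I_sq]
    linear_combination htr
  rw [coe_eq_coe_iff]
  rcases (Commute.all _ _).sq_eq_sq_iff_eq_or_eq_neg.mp hp with rfl | rfl
  · left
    ext i j
    fin_cases i <;> fin_cases j <;> simp [hD, hY]
  · right
    ext i j
    fin_cases i <;> fin_cases j <;> simp [hD, hY]

lemma finite_setOf_forall_apply_mem {F : Set ℂ} (hF : F.Finite) :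
    {Z : SL2 | ∀ i j, Z i j ∈ F}.Finite :=
  ((Set.Finite.pi fun _ => Set.Finite.pi fun _ => hF).preimage
    (f := fun Z : SL2 => (↑ₘZ : Fin 2 → Fin 2 → ℂ)) Subtype.val_injective.injOn).subset
    fun _ hZ i _ j _ => hZ i j

lemma sq_apply_mul_eq_of_coe_commute {Z K : SL2} (h : Commute (Z : PSL2) K) (i j : Fin 2) :
    (↑ₘZ * ↑ₘK) i j ^ 2 = (↑ₘK * ↑ₘZ) i j ^ 2 := by
  rw [← Matrix.SpecialLinearGroup.coe_mul, ← Matrix.SpecialLinearGroup.coe_mul]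
  rcases coe_commute_iff.mp h with h | h
  · rw [h.eq]
  · rw [h, Matrix.SpecialLinearGroup.coe_neg, neg_apply, neg_sq]

/-- Every entry `x` of a lift of an element of this centralizer satisfies
`x ^ 4 ∈ {0, 1, m ^ 4, m⁻¹ ^ 4}`. -/
lemma finite_setOf_commute_diagonal_antidiagonal {l m : ℂ} {D K : SL2}
    (hD : ↑ₘD = diagonal ![l, l⁻¹]) (hl : l ≠ l⁻¹) (hK : ↑ₘK = !![0, m; -m⁻¹, 0]) :
    {z : PSL2 | Commute z D ∧ Commute z K}.Finite := by
  have hm : m ≠ 0 := by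
    rintro rfl
    simpa [hK] using K.det_coe
  let F : Set ℂ := (· ^ 4) ⁻¹' {0, 1, m ^ 4, m⁻¹ ^ 4}
  have hF : F.Finite := (Set.toFinite _).preimage' fun b _ =>
    (Polynomial.nthRoots 4 b).toFinset.finite_toSet.subset fun x hx => by
      simpa [Polynomial.mem_nthRoots] using hx
  refine ((finite_setOf_forall_apply_mem hF).image (fun Z : SL2 => (Z : PSL2))).subset ?_
  rintro z ⟨hzD, hzK⟩
  obtain ⟨Z, rfl⟩ := QuotientGroup.mk_surjective z
  refine ⟨Z, fun i j => ?_, rfl⟩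
  rcases isDiagOrAnti_of_coe_commute hD hl hzD with ⟨p, hp, hZ⟩ | ⟨q, hq, hZ⟩
  · have h := sq_apply_mul_eq_of_coe_commute hzK 0 1
    simp only [hZ, hK, mul_apply, of_apply, cons_val', cons_val_fin_one, cons_val_zero,
      cons_val_one, Fin.sum_univ_two, mul_zero, add_zero, zero_add] at h
    have hp4 : p ^ 4 = 1 := by
      field_simp at h
      linear_combination h
    fin_cases i <;> fin_cases j <;> simp [F, hZ, hp4, inv_pow]
  · have h := sq_apply_mul_eq_of_coe_commute hzK 0 0
    simp only [hZ, hK, mul_apply, of_apply, cons_val', cons_val_fin_one, cons_val_zero,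
      Fin.sum_univ_two, mul_zero, cons_val_one, mul_neg, zero_add, even_two, Even.neg_pow] at h
    have hq4 : q ^ 4 = m ^ 4 := by
      field_simp at h
      linear_combination h
    have hq4' : (-q⁻¹) ^ 4 = (m ^ 4)⁻¹ := by rw [← hq4]; ring
    fin_cases i <;> fin_cases j <;> simp [F, hZ, hq4, hq4']

lemma mulVec_single_zero_of_apply_one_zero {N : SL2} (h10 : N 1 0 = 0) :
    ↑ₘN *ᵥ Pi.single 0 1 = N 0 0 • Pi.single 0 1 := by
  ext i
  fin_cases i <;> simp [mulVec, dotProduct, Fin.sum_univ_two, h10]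

lemma coe_eq_one_of_coe_conj_eq_scalar {P M : SL2} {l : ℂ}
    (h : ↑ₘ(P * M * P⁻¹) = !![l, 0; 0, l]) : (M : PSL2) = 1 := by
  have hl : l ^ 2 = 1 := by simpa [h, sq] using (P * M * P⁻¹).det_coe
  have hcenter : P * M * P⁻¹ ∈ Subgroup.center SL2 := by
    refine mem_center_iff.mpr ((sq_eq_one_iff.mp hl).imp (fun hl1 => ?_) (fun hl1 => ?_)) <;>
      ext i j <;> fin_cases i <;> fin_cases j <;> simp [h, hl1]
  rwa [← QuotientGroup.eq_one_iff, coe_conj, conj_eq_one_iff] at hcenter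

variable {H A : Subgroup PSL2}

lemma isDihedral_of_forall_isDiagOrAnti (P : SL2)
    (h : ∀ N : SL2, (N : PSL2) ∈ H → IsDiagOrAnti (P * N * P⁻¹)) : IsDihedral H :=
  ⟨P, fun x hx => by
    obtain ⟨N, rfl⟩ := QuotientGroup.mk_surjective x
    exact ⟨_, h N hx, rfl⟩⟩

/-- `H` fixes the line spanned by the first column of `P⁻¹`, where
`P M P⁻¹ = ±[[1, t], [0, 1]]`. -/
lemma not_isIrreducibleSubgroup_of_parabolic_mem (hA : ∀ a ∈ A, ∀ b ∈ A, Commute a b)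
    (hHA : ∀ h ∈ H, ∀ a ∈ A, h * a * h⁻¹ ∈ A) {M : SL2} (hMA : (M : PSL2) ∈ A)
    (hM1 : (M : PSL2) ≠ 1) {l : ℂ} (hl0 : l ≠ 0) (hl : l = l⁻¹) (htr : trace ↑ₘM = l + l⁻¹) :
    ¬ IsIrreducibleSubgroup H := by
  obtain ⟨P, t, hT⟩ := exists_conj_eq_upperTriangular M hl0 htr
  rw [← hl] at hT htr
  have ht : t ≠ 0 := by
    rintro rfl
    exact hM1 (coe_eq_one_of_coe_conj_eq_scalar hT)
  refine fun hirr => hirr ⟨↑ₘP⁻¹ *ᵥ Pi.single 0 1, ?_, fun N hN => ?_⟩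
  · intro h
    have := congrArg (↑ₘP *ᵥ ·) h
    simp only [mulVec_mulVec, ← Matrix.SpecialLinearGroup.coe_mul, mul_inv_cancel,
      Matrix.SpecialLinearGroup.coe_one, one_mulVec, mulVec_zero] at this
    simpa using congrFun this 0
  have hXA : ((N⁻¹ * M * N : SL2) : PSL2) ∈ A := by
    simpa using hHA _ (inv_mem hN) _ hMA
  have hX : Commute (N⁻¹ * M * N) M :=
    commute_of_coe_commute (hA _ hXA _ hMA) (by rw [htr]; simpa using hl0)
  have h10 : (P * N * P⁻¹) 1 0 = 0 := by
    refine apply_one_zero_eq_zero_of_intertwines_parabolic (ε := l)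
      (X := ↑ₘ(P * (N⁻¹ * M * N) * P⁻¹)) ht ?_ ?_
    · rw [← hT, ← Matrix.SpecialLinearGroup.coe_mul, ((Commute.conj_iff P).mpr hX).eq,
        Matrix.SpecialLinearGroup.coe_mul]
    · have e : P * N * P⁻¹ * (P * (N⁻¹ * M * N) * P⁻¹) = P * M * P⁻¹ * (P * N * P⁻¹) := by
        group
      rw [← hT, ← Matrix.SpecialLinearGroup.coe_mul, ← Matrix.SpecialLinearGroup.coe_mul, e]
  refine ⟨(P * N * P⁻¹) 0 0, ?_⟩
  calc ↑ₘN *ᵥ (↑ₘP⁻¹ *ᵥ Pi.single 0 1) = ↑ₘP⁻¹ *ᵥ (↑ₘ(P * N * P⁻¹) *ᵥ Pi.single 0 1) := by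
        simp only [mulVec_mulVec, ← Matrix.SpecialLinearGroup.coe_mul, mul_assoc,
          inv_mul_cancel_left]
    _ = (P * N * P⁻¹) 0 0 • (↑ₘP⁻¹ *ᵥ Pi.single 0 1) := by
        rw [mulVec_single_zero_of_apply_one_zero h10, mulVec_smul]

lemma isDihedral_of_regular_mem (hA : ∀ a ∈ A, ∀ b ∈ A, Commute a b)
    (hHA : ∀ h ∈ H, ∀ a ∈ A, h * a * h⁻¹ ∈ A) {M : SL2} (hMA : (M : PSL2) ∈ A) {l : ℂ}
    (hl0 : l ≠ 0) (hl : l ≠ l⁻¹) (htr : trace ↑ₘM = l + l⁻¹) (htr0 : trace ↑ₘM ≠ 0) :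
    IsDihedral H := by
  obtain ⟨P, hP⟩ := exists_conj_eq_diagonal M hl0 hl htr
  refine isDihedral_of_forall_isDiagOrAnti P fun N hN =>
    isDiagOrAnti_of_coe_commute_conj hP hl (htr ▸ htr0) ?_
  rw [show P * N * P⁻¹ * (P * M * P⁻¹) * (P * N * P⁻¹)⁻¹ = P * (N * M * N⁻¹) * P⁻¹ by group,
    coe_conj, coe_conj, coe_conj]
  exact (Commute.conj_iff _).mpr (hA _ (hHA _ hN _ hMA) _ hMA)

lemma isDihedral_of_forall_trace_eq_zero (hinf : (H : Set PSL2).Infinite)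
    (hA : ∀ a ∈ A, ∀ b ∈ A, Commute a b) (hHA : ∀ h ∈ H, ∀ a ∈ A, h * a * h⁻¹ ∈ A) {M : SL2}
    (hMA : (M : PSL2) ∈ A) (hM1 : (M : PSL2) ≠ 1)
    (htr : ∀ N : SL2, (N : PSL2) ∈ A → (N : PSL2) ≠ 1 → trace ↑ₘN = 0) : IsDihedral H := by
  have hI : Complex.I ≠ Complex.I⁻¹ := by simp [Complex.inv_I, self_eq_neg]
  obtain ⟨P, hP⟩ := exists_conj_eq_diagonal M Complex.I_ne_zero hI
    (by rw [htr M hMA hM1, Complex.inv_I, add_neg_cancel])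
  have hconjA : ∀ C : SL2, (C : PSL2) ∈ A → IsDiagOrAnti (P * C * P⁻¹) := fun C hC =>
    isDiagOrAnti_of_coe_commute hP hI
      (by rw [coe_conj, coe_conj]; exact (Commute.conj_iff _).mpr (hA _ hC _ hMA))
  by_cases hK : ∃ C : SL2, (C : PSL2) ∈ A ∧ ∃ m ≠ 0, ↑ₘ(P * C * P⁻¹) = !![0, m; -m⁻¹, 0]
  · obtain ⟨C, hCA, m, -, hC⟩ := hK
    refine absurd (finite_of_normalizes_of_finite_centralizer hA hHA hMA hCA ?_) hinf
    refine ((finite_setOf_commute_diagonal_antidiagonal hP hI hC).preimage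
      (f := fun z => (P : PSL2) * z * (P : PSL2)⁻¹) fun a _ b _ e => ?_).subset fun z hz => ?_
    · simpa using e
    · simp only [Set.mem_preimage, Set.mem_ofPred_eq, coe_conj, Commute.conj_iff]
      exact hz
  refine isDihedral_of_forall_isDiagOrAnti P fun N hN => isDiagOrAnti_of_coe_commute hP hI ?_
  have hyA : ((N * M * N⁻¹ : SL2) : PSL2) ∈ A := hHA _ hN _ hMA
  have hy1 : ((N * M * N⁻¹ : SL2) : PSL2) ≠ 1 := by rwa [coe_conj, Ne, conj_eq_one_iff]
  have hy : ((N * M * N⁻¹ : SL2) : PSL2) = M := by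
    rcases hconjA _ hyA with ⟨p, -, hY⟩ | ⟨m, hm, hY⟩
    · have := coe_eq_of_trace_eq_zero hP hY (by rw [trace_conj]; exact htr _ hyA hy1)
      rwa [coe_conj, coe_conj P M, mul_left_inj, mul_right_inj] at this
    · exact absurd ⟨_, hyA, m, hm, hY⟩ hK
  rw [coe_conj, coe_conj, Commute.conj_iff]
  rw [coe_conj, mul_inv_eq_iff_eq_mul] at hy
  exact hy

theorem isDihedral_of_normalizes_commutative (hirr : IsIrreducibleSubgroup H)
    (hinf : (H : Set PSL2).Infinite) (hA : ∀ a ∈ A, ∀ b ∈ A, Commute a b)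
    (hHA : ∀ h ∈ H, ∀ a ∈ A, h * a * h⁻¹ ∈ A) (hA1 : A ≠ ⊥) : IsDihedral H := by
  obtain ⟨x, hxA, hx1⟩ := A.bot_or_exists_ne_one.resolve_left hA1
  obtain ⟨M, rfl⟩ := QuotientGroup.mk_surjective x
  by_cases h : ∃ N : SL2, (N : PSL2) ∈ A ∧ (N : PSL2) ≠ 1 ∧ trace ↑ₘN ≠ 0
  · obtain ⟨N, hNA, hN1, htr0⟩ := h
    obtain ⟨l, hl0, htr⟩ := exists_trace_eq_add_inv N
    by_cases hl : l = l⁻¹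
    · exact absurd hirr (not_isIrreducibleSubgroup_of_parabolic_mem hA hHA hNA hN1 hl0 hl htr)
    · exact isDihedral_of_regular_mem hA hHA hNA hl0 hl htr htr0
  · exact isDihedral_of_forall_trace_eq_zero hinf hA hHA hxA hx1 fun N hNA hN1 =>
      not_not.mp fun htr0 => h ⟨N, hNA, hN1, htr0⟩

end SL2

/-- Any irreducible representation of a solvable group into `PSL₂(ℂ)` with infinite
image has dihedral image. -/
theorem solvable_irreducible_infinite_image_isDihedral
    {G : Type*} [Group G] (hG : IsSolvable G) (ρ : G →* PSL2)
    (hirr : IsIrreducibleSubgroup ρ.range) (hinf : Infinite ρ.range) :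
    IsDihedral ρ.range := by
  have : Group.IsSolvable G := hG
  have hinf' : (ρ.range : Set PSL2).Infinite := Set.infinite_coe_iff.mp hinf
  obtain ⟨A, hA1, hA, hHA⟩ := exists_commutative_normalized_of_isSolvable ρ fun h =>
    hinf' (by rw [h, Subgroup.coe_bot]; exact Set.finite_singleton 1)
  exact SL2.isDihedral_of_normalizes_commutative hirr hinf' hA hHA hA1
end

section
/- For every u ∈ ℂ with u ∉ {0, 1, −1}, the following two triples of matrices, regarded as elements of PSL₂(ℂ), satisfy the relations A·C·A = C·A·C, B·C = C·B and (A·B)² = (B·A)²: (1) A = [[u⁻¹,1],[0,u]], B = [[u²,0],[−(u+u⁻¹),u⁻²]], C = [[u,0],[−1,u⁻¹]]; (2) A = [[u,1],[0,u⁻¹]], B = [[u²,0],[−(u²+1)(u⁴−u²+1)/u³, u⁻²]], C = [[u,0],[−(u⁴−u²+1)/u², u⁻¹]]. (These give one-parameter families of representations of the group Γ₃′ = ⟨a,b,c | aca = cac, [b,c] = 1, (ab)² = (ba)²⟩ into PSL₂(ℂ).) -/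
/-- The element of `SL₂(ℂ)` with entries `a b c d`, given a proof of determinant one. -/
def mk2 (a b c d : ℂ) (h : a * d - b * c = 1) : SL2 :=
  ⟨!![a, b; c, d], by rw [Matrix.det_fin_two_of]; exact h⟩

lemma mk2_mul {a b c d a' b' c' d' : ℂ} (h : a * d - b * c = 1) (h' : a' * d' - b' * c' = 1) :
    mk2 a b c d h * mk2 a' b' c' d' h' =
      mk2 (a * a' + b * c') (a * b' + b * d') (c * a' + d * c') (c * b' + d * d')
        (by linear_combination (a' * d' - b' * c') * h + h') :=
  Subtype.ext (Matrix.mul_fin_two ..)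

lemma mk2_congr {a b c d a' b' c' d' : ℂ} (h : a * d - b * c = 1) (h' : a' * d' - b' * c' = 1)
    (ha : a = a') (hb : b = b') (hc : c = c') (hd : d = d') :
    mk2 a b c d h = mk2 a' b' c' d' h' := by
  subst ha hb hc hd; rfl

def IsGamma3'Triple {G : Type*} [Group G] (a b c : G) : Prop :=
  a * c * a = c * a * c ∧ b * c = c * b ∧ (a * b) ^ 2 = (b * a) ^ 2

lemma IsGamma3'Triple.map {G H : Type*} [Group G] [Group H] {a b c : G}
    (habc : IsGamma3'Triple a b c) (f : G →* H) : IsGamma3'Triple (f a) (f b) (f c) := by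
  obtain ⟨hac, hbc, hab⟩ := habc
  refine ⟨?_, ?_, ?_⟩ <;> simp only [← map_mul, ← map_pow, hac, hbc, hab]

lemma isGamma3'Triple_first_family (u : ℂ) (hu : u ≠ 0) :
    IsGamma3'Triple (mk2 u⁻¹ 1 0 u (by field_simp; ring))
      (mk2 (u ^ 2) 0 (-(u + u⁻¹)) (u ^ 2)⁻¹ (by field_simp; ring))
      (mk2 u 0 (-1) u⁻¹ (by field_simp; ring)) := by
  refine ⟨?_, ?_, ?_⟩ <;> simp only [pow_two, mk2_mul] <;>
    apply mk2_congr <;> field_simp <;> ring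

lemma isGamma3'Triple_second_family (u : ℂ) (hu : u ≠ 0) :
    IsGamma3'Triple (mk2 u 1 0 u⁻¹ (by field_simp; ring))
      (mk2 (u ^ 2) 0 (-((u ^ 2 + 1) * (u ^ 4 - u ^ 2 + 1) / u ^ 3)) (u ^ 2)⁻¹
        (by field_simp; ring))
      (mk2 u 0 (-((u ^ 4 - u ^ 2 + 1) / u ^ 2)) u⁻¹ (by field_simp; ring)) := by
  refine ⟨?_, ?_, ?_⟩ <;> simp only [pow_two, mk2_mul] <;>
    apply mk2_congr <;> field_simp <;> ring

/-- For `u ∉ {0, 1, −1}`, the two explicit triples of matrices, viewed in `PSL₂(ℂ)`,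
satisfy the relations `ACA = CAC`, `BC = CB` and `(AB)² = (BA)²` of the group
`Γ₃′ = ⟨a,b,c | aca = cac, [b,c] = 1, (ab)² = (ba)²⟩`. -/
theorem Gamma3'_families (u : ℂ) (hu : u ≠ 0) :
    (let A : PSL2 := QuotientGroup.mk (mk2 u⁻¹ 1 0 u (by field_simp; ring))
     let B : PSL2 := QuotientGroup.mk (mk2 (u ^ 2) 0 (-(u + u⁻¹)) (u ^ 2)⁻¹
       (by field_simp; ring))
     let C : PSL2 := QuotientGroup.mk (mk2 u 0 (-1) u⁻¹ (by field_simp; ring))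
     A * C * A = C * A * C ∧ B * C = C * B ∧ (A * B) ^ 2 = (B * A) ^ 2) ∧
    (let A : PSL2 := QuotientGroup.mk (mk2 u 1 0 u⁻¹ (by field_simp; ring))
     let B : PSL2 := QuotientGroup.mk (mk2 (u ^ 2) 0
       (-((u ^ 2 + 1) * (u ^ 4 - u ^ 2 + 1) / u ^ 3)) (u ^ 2)⁻¹ (by field_simp; ring))
     let C : PSL2 := QuotientGroup.mk (mk2 u 0 (-((u ^ 4 - u ^ 2 + 1) / u ^ 2)) u⁻¹
       (by field_simp; ring))
     A * C * A = C * A * C ∧ B * C = C * B ∧ (A * B) ^ 2 = (B * A) ^ 2) :=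
  ⟨(isGamma3'Triple_first_family u hu).map (QuotientGroup.mk' _),
    (isGamma3'Triple_second_family u hu).map (QuotientGroup.mk' _)⟩
end

section
/- For every s ∈ ℂ with s ≠ 0, there exists an element g of the subgroup of the group of bijections of (SL₂(ℂ))⁴ generated by β₁, β₂, β₃ such that χ(g(ρ₂(s, s))) = χ(ρ₄(s)), where ρ₂(u,v) := (J, D(v), D(u), D(v)) and ρ₄(s) := (J, D(s), D(s), D(s⁻¹)) in (SL₂(ℂ))⁴. (This is the statement that the full mapping class group orbit of the class of ρ₄ with parameter s is a special case of the orbit of ρ₂ with parameters (u,v) = (s, s).) -/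
noncomputable section

/-- The matrix `J = [[0,1],[−1,0]]` in `SL₂(ℂ)`. -/
def J : SL2 := mk2 0 1 (-1) 0 (by norm_num)

/-- The diagonal matrix `D(u) = [[u,0],[0,u⁻¹]]` in `SL₂(ℂ)`, for `u ≠ 0`. -/
def D (u : ℂ) (hu : u ≠ 0) : SL2 := mk2 u 0 0 u⁻¹ (by field_simp; norm_num)

/-- Quadruples of elements of `SL₂(ℂ)`. -/
abbrev S4 : Type := SL2 × SL2 × SL2 × SL2

/-- The braid/Hurwitz action of `σ₁` as a bijection of `S4`. -/
def β1 : Equiv.Perm S4 where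
  toFun M := (M.1 * M.2.1 * M.1⁻¹, M.1, M.2.2.1, M.2.2.2)
  invFun N := (N.2.1, N.2.1⁻¹ * N.1 * N.2.1, N.2.2.1, N.2.2.2)
  left_inv := by rintro ⟨a, b, c, d⟩; simp [mul_assoc]
  right_inv := by rintro ⟨a, b, c, d⟩; simp [mul_assoc]

/-- The braid/Hurwitz action of `σ₂` as a bijection of `S4`. -/
def β2 : Equiv.Perm S4 where
  toFun M := (M.1, M.2.1 * M.2.2.1 * M.2.1⁻¹, M.2.1, M.2.2.2)
  invFun N := (N.1, N.2.2.1, N.2.2.1⁻¹ * N.2.1 * N.2.2.1, N.2.2.2)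
  left_inv := by rintro ⟨a, b, c, d⟩; simp [mul_assoc]
  right_inv := by rintro ⟨a, b, c, d⟩; simp [mul_assoc]

/-- The braid/Hurwitz action of `σ₃` as a bijection of `S4`. -/
def β3 : Equiv.Perm S4 where
  toFun M := (M.1, M.2.1, M.2.2.1 * M.2.2.2 * M.2.2.1⁻¹, M.2.2.1)
  invFun N := (N.1, N.2.1, N.2.2.2, N.2.2.2⁻¹ * N.2.2.1 * N.2.2.2)
  left_inv := by rintro ⟨a, b, c, d⟩; simp [mul_assoc]
  right_inv := by rintro ⟨a, b, c, d⟩; simp [mul_assoc]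

/-- The subgroup of bijections of `S4` generated by the images of the standard
generators of the pure braid group `PB₄`. -/
def P : Subgroup (Equiv.Perm S4) :=
  Subgroup.closure {β1 ^ 2, β2 ^ 2, β3 ^ 2,
    β2 * β1 ^ 2 * β2⁻¹, β3 * β2 ^ 2 * β3⁻¹, β3 * β2 * β1 ^ 2 * β2⁻¹ * β3⁻¹}

/-- The trace of an element of `SL₂(ℂ)`. -/
def tr (A : SL2) : ℂ := Matrix.trace (A : Matrix (Fin 2) (Fin 2) ℂ)

/-- The 15 trace coordinates on `S4` determining a point of the character variety
`Char(0,5)`. -/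
def χ (M : S4) : Fin 15 → ℂ :=
  ![tr M.1, tr M.2.1, tr M.2.2.1, tr M.2.2.2,
    tr (M.1 * M.2.1 * M.2.2.1 * M.2.2.2),
    tr (M.1 * M.2.1), tr (M.1 * M.2.2.1), tr (M.1 * M.2.2.2),
    tr (M.2.1 * M.2.2.1), tr (M.2.1 * M.2.2.2), tr (M.2.2.1 * M.2.2.2),
    tr (M.1 * M.2.1 * M.2.2.1), tr (M.1 * M.2.1 * M.2.2.2),
    tr (M.1 * M.2.2.1 * M.2.2.2), tr (M.2.1 * M.2.2.1 * M.2.2.2)]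

/-- The subgroup of bijections of `S4` generated by `β₁, β₂, β₃` (the image of the full
braid group `B₄`). -/
def FullB : Subgroup (Equiv.Perm S4) := Subgroup.closure {β1, β2, β3}

/-! With `x = a b a⁻¹`, the braid `β₃ β₂ β₁²` sends `(a, b, c, d)` to `(x a x⁻¹, x c x⁻¹, x d x⁻¹, x)`,
the conjugate by `x` of `(a, c, d, x)`, and trace coordinates do not see simultaneous conjugation.
For `ρ₂(s, s) = (J, D(s), D(s), D(s))` this gives `x = J D(s) J⁻¹ = D(s⁻¹)`, i.e. `ρ₄(s)`. -/

@[simp]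
lemma coe_mk2 (a b c d : ℂ) (h : a * d - b * c = 1) :
    (mk2 a b c d h : Matrix (Fin 2) (Fin 2) ℂ) = !![a, b; c, d] :=
  rfl

lemma tr_conj (c a : SL2) : tr (c * a * c⁻¹) = tr a := by
  unfold tr
  rw [Matrix.SpecialLinearGroup.coe_mul, Matrix.trace_mul_comm,
    ← Matrix.SpecialLinearGroup.coe_mul, inv_mul_cancel_left]

lemma χ_conj (c a b d e : SL2) :
    χ (c * a * c⁻¹, c * b * c⁻¹, c * d * c⁻¹, c * e * c⁻¹) = χ (a, b, d, e) := by
  simp only [χ, conj_mul, tr_conj]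

lemma χ_β3_mul_β2_mul_β1_mul_β1_apply (a b c d : SL2) :
    χ ((β3 * β2 * β1 * β1) (a, b, c, d)) = χ (a, c, d, a * b * a⁻¹) := by
  set x := a * b * a⁻¹
  calc χ ((β3 * β2 * β1 * β1) (a, b, c, d))
      = χ (x * a * x⁻¹, x * c * x⁻¹, x * d * x⁻¹, x * x * x⁻¹) := by
        rw [mul_inv_cancel_right]; rfl
    _ = χ (a, c, d, x) := χ_conj x a c d x

lemma J_mul_D_mul_J_inv (u : ℂ) (hu : u ≠ 0) : J * D u hu * J⁻¹ = D u⁻¹ (inv_ne_zero hu) := by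
  rw [mul_inv_eq_iff_eq_mul]
  ext i j
  fin_cases i <;> fin_cases j <;> simp [J, D]

lemma β3_mul_β2_mul_β1_mul_β1_mem_fullB : β3 * β2 * β1 * β1 ∈ FullB := by
  have h1 : β1 ∈ FullB := Subgroup.subset_closure (by simp)
  have h2 : β2 ∈ FullB := Subgroup.subset_closure (by simp)
  have h3 : β3 ∈ FullB := Subgroup.subset_closure (by simp)
  exact mul_mem (mul_mem (mul_mem h3 h2) h1) h1

/-- The full mapping class group orbit of the class of
`ρ₄(s) = (J, D(s), D(s), D(s⁻¹))` is a special case of the orbit of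
`ρ₂(u,v) = (J, D(v), D(u), D(v))` with `(u,v) = (s, s)`. -/
theorem rho4_orbit_specializes_rho2 (s : ℂ) (hs : s ≠ 0) :
    ∃ g ∈ FullB,
      χ (g (J, D s hs, D s hs, D s hs)) =
      χ (J, D s hs, D s hs, D s⁻¹ (inv_ne_zero hs)) := by
  refine ⟨β3 * β2 * β1 * β1, β3_mul_β2_mul_β1_mul_β1_mem_fullB, ?_⟩
  rw [χ_β3_mul_β2_mul_β1_mul_β1_apply, J_mul_D_mul_J_inv]
end
end
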